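/- Let S and A be nonempty finite sets, let P be a transition kernel on S × A, let γ ∈ [0,1), let η be a behaviour policy, and let λ_t : A → ℝ (t ∈ ℕ) satisfy 0 ≤ λ_t(a) ≤ 1 for all t and a. For each (s,a) ∈ S × A define ξ(s,a) := Σ_{t=1}^∞ γ^t · E_{(s_t,a_t)∼μ_t^{(s,a)}}[ 1 − λ_t(a_t) ]. Then this series converges, ξ(s,a) ≥ 0, and if moreover E_{b∼η(y)}[λ_t(b)] ≥ γ for all y ∈ S and all t ≥ 1, then ξ(s,a) ≤ γ for all (s,a). -/
import Mathlib


open Finset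

/-- `p` is a probability mass function on a finite type. -/
def IsPMF {X : Type*} [Fintype X] (p : X → ℝ) : Prop :=
  (∀ x, 0 ≤ p x) ∧ ∑ x, p x = 1

variable {S A : Type*}

/-- Expectation of `Q` over actions under policy `π` at state `s`:
`E_π Q(s) = Σ_a π(s)(a) · Q(s,a)`. -/
def Epol [Fintype A] (π : S → A → ℝ) (Q : S × A → ℝ) (s : S) : ℝ :=
  ∑ a, π s a * Q (s, a)

/-- The Bellman operator `T^π`:
`(T^π Q)(s,a) = r(s,a) + γ · Σ_{s'} P(s,a)(s') · E_π Q(s')`. -/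
def bellman [Fintype S] [Fintype A] (P : S → A → S → ℝ) (r : S × A → ℝ) (γ : ℝ)
    (π : S → A → ℝ) (Q : S × A → ℝ) : S × A → ℝ :=
  fun p => r p + γ * ∑ s', P p.1 p.2 s' * Epol π Q s'

/-- The law `μ_t^{(s,a)}` of the state-action pair at time `t`, starting from the
point mass at `init` and then following the transition kernel `P` and the
behaviour policy `η`. -/
def mu [Fintype S] [Fintype A] [DecidableEq S] [DecidableEq A]
    (P : S → A → S → ℝ) (η : S → A → ℝ) (init : S × A) : ℕ → S × A → ℝ
  | 0 => fun p => if p = init then 1 else 0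
  | t + 1 => fun p => (∑ q : S × A, mu P η init t q * P q.1 q.2 p.1) * η p.1 p.2

/-- The `S`-marginal `ν_t^{(s,a)}` of `μ_t^{(s,a)}`. -/
def nu [Fintype S] [Fintype A] [DecidableEq S] [DecidableEq A]
    (P : S → A → S → ℝ) (η : S → A → ℝ) (init : S × A) (t : ℕ) (y : S) : ℝ :=
  ∑ b, mu P η init t (y, b)

/-- The one-step importance sampling operator `H`:
`H Q(s,a) = Q(s,a) + Σ_{t≥0} γ^t · E_{(s_t,a_t)∼μ_t^{(s,a)}}[ λ_t(a_t) ·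
  (r(s_t,a_t) + γ · Σ_{s'} P(s_t,a_t)(s') · E_π Q(s') − Q(s_t,a_t)) ]`. -/
noncomputable def Hop [Fintype S] [Fintype A] [DecidableEq S] [DecidableEq A]
    (P : S → A → S → ℝ) (r : S × A → ℝ) (γ : ℝ) (π η : S → A → ℝ)
    (lam : ℕ → A → ℝ) (Q : S × A → ℝ) : S × A → ℝ :=
  fun sa => Q sa + ∑' t : ℕ, γ ^ t *
    ∑ p : S × A, mu P η sa t p *
      (lam t p.2 * (r p + γ * ∑ s', P p.1 p.2 s' * Epol π Q s' - Q p))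

/-- The state-action–dependent contraction coefficient
`ξ(s,a) = Σ_{t≥1} γ^t · E_{(s_t,a_t)∼μ_t^{(s,a)}}[1 − λ_t(a_t)]`. -/
noncomputable def xi [Fintype S] [Fintype A] [DecidableEq S] [DecidableEq A]
    (P : S → A → S → ℝ) (γ : ℝ) (η : S → A → ℝ) (lam : ℕ → A → ℝ)
    (sa : S × A) : ℝ :=
  ∑' t : ℕ, γ ^ (t + 1) *
    ∑ p : S × A, mu P η sa (t + 1) p * (1 - lam (t + 1) p.2)


lemma mu_nonneg [Fintype S] [Fintype A] [DecidableEq S] [DecidableEq A]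
    (P : S → A → S → ℝ) (hP : ∀ s a, IsPMF (P s a))
    (η : S → A → ℝ) (hη : ∀ s, IsPMF (η s)) (init : S × A) :
    ∀ t p, 0 ≤ mu P η init t p := by
  intro t
  induction t with
  | zero => intro p; simp [mu]; split <;> norm_num
  | succ t ih =>
    intro p
    refine mul_nonneg (Finset.sum_nonneg fun q _ => mul_nonneg (ih q) ((hP q.1 q.2).1 p.1))
      ((hη p.1).1 p.2)

lemma mu_sum_one [Fintype S] [Fintype A] [DecidableEq S] [DecidableEq A]
    (P : S → A → S → ℝ) (hP : ∀ s a, IsPMF (P s a))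
    (η : S → A → ℝ) (hη : ∀ s, IsPMF (η s)) (init : S × A) :
    ∀ t, ∑ p : S × A, mu P η init t p = 1 := by
  intro t
  induction t with
  | zero => simp [mu]
  | succ t ih =>
    rw [Fintype.sum_prod_type]
    have : ∀ y : S, ∑ b : A, mu P η init (t + 1) (y, b)
        = ∑ q : S × A, mu P η init t q * P q.1 q.2 y := by
      intro y
      simp only [mu]
      rw [← Finset.mul_sum, (hη y).2, mul_one]
    simp only [this]
    rw [Finset.sum_comm]
    calc ∑ q : S × A, ∑ y : S, mu P η init t q * P q.1 q.2 y
        = ∑ q : S × A, mu P η init t q := by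
          refine Finset.sum_congr rfl fun q _ => ?_
          rw [← Finset.mul_sum, (hP q.1 q.2).2, mul_one]
      _ = 1 := ih

/-- The series defining `ξ(s,a)` converges, `ξ(s,a) ≥ 0`, and if additionally
`E_{b∼η(y)}[λ_t(b)] ≥ γ` for all `y` and all `t ≥ 1`, then `ξ(s,a) ≤ γ`. -/
theorem xi_summable_nonneg_le
    [Fintype S] [Nonempty S] [Fintype A] [Nonempty A]
    [DecidableEq S] [DecidableEq A]
    (P : S → A → S → ℝ) (hP : ∀ s a, IsPMF (P s a))
    (γ : ℝ) (hγ0 : 0 ≤ γ) (hγ1 : γ < 1)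
    (η : S → A → ℝ) (hη : ∀ s, IsPMF (η s))
    (lam : ℕ → A → ℝ) (hlam : ∀ t a, 0 ≤ lam t a ∧ lam t a ≤ 1) :
    ∀ sa : S × A,
      Summable (fun t : ℕ => γ ^ (t + 1) *
        ∑ p : S × A, mu P η sa (t + 1) p * (1 - lam (t + 1) p.2))
      ∧ 0 ≤ xi P γ η lam sa
      ∧ ((∀ t : ℕ, 1 ≤ t → ∀ y : S, γ ≤ ∑ b, η y b * lam t b) →
          xi P γ η lam sa ≤ γ) := by
  intro sa
  -- basic bounds on the inner sum
  have hmu0 := mu_nonneg P hP η hη sa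
  have hmu1 := mu_sum_one P hP η hη sa
  have hin_nonneg : ∀ t : ℕ,
      0 ≤ ∑ p : S × A, mu P η sa (t + 1) p * (1 - lam (t + 1) p.2) := by
    intro t
    exact Finset.sum_nonneg fun p _ => mul_nonneg (hmu0 _ p)
      (by linarith [(hlam (t + 1) p.2).2])
  have hin_le_one : ∀ t : ℕ,
      (∑ p : S × A, mu P η sa (t + 1) p * (1 - lam (t + 1) p.2)) ≤ 1 := by
    intro t
    calc (∑ p : S × A, mu P η sa (t + 1) p * (1 - lam (t + 1) p.2))
        ≤ ∑ p : S × A, mu P η sa (t + 1) p := by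
          refine Finset.sum_le_sum fun p _ => ?_
          have := (hlam (t + 1) p.2).1
          nlinarith [hmu0 (t + 1) p]
      _ = 1 := hmu1 (t + 1)
  have hsum : Summable (fun t : ℕ => γ ^ (t + 1) *
      ∑ p : S × A, mu P η sa (t + 1) p * (1 - lam (t + 1) p.2)) := by
    refine Summable.of_nonneg_of_le
      (fun t => mul_nonneg (pow_nonneg hγ0 _) (hin_nonneg t))
      (fun t => ?_)
      ((summable_geometric_of_lt_one hγ0 hγ1).mul_left γ)
    calc γ ^ (t + 1) * ∑ p : S × A, mu P η sa (t + 1) p * (1 - lam (t + 1) p.2)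
        ≤ γ ^ (t + 1) * 1 :=
          mul_le_mul_of_nonneg_left (hin_le_one t) (pow_nonneg hγ0 _)
      _ = γ * γ ^ t := by ring
  refine ⟨hsum, tsum_nonneg fun t =>
    mul_nonneg (pow_nonneg hγ0 _) (hin_nonneg t), fun hexp => ?_⟩
  -- under the extra hypothesis, inner sum ≤ 1 - γ
  have hin_le : ∀ t : ℕ,
      (∑ p : S × A, mu P η sa (t + 1) p * (1 - lam (t + 1) p.2)) ≤ 1 - γ := by
    intro t
    have hsplit : (∑ p : S × A, mu P η sa (t + 1) p * (1 - lam (t + 1) p.2))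
        = 1 - ∑ p : S × A, mu P η sa (t + 1) p * lam (t + 1) p.2 := by
      calc (∑ p : S × A, mu P η sa (t + 1) p * (1 - lam (t + 1) p.2))
          = ∑ p : S × A, (mu P η sa (t + 1) p - mu P η sa (t + 1) p * lam (t + 1) p.2) :=
            Finset.sum_congr rfl fun p _ => by ring
        _ = _ := by rw [Finset.sum_sub_distrib, hmu1 (t + 1)]
    rw [hsplit]
    have : γ ≤ ∑ p : S × A, mu P η sa (t + 1) p * lam (t + 1) p.2 := by
      rw [Fintype.sum_prod_type]
      have hy : ∀ y : S, ∑ b : A, mu P η sa (t + 1) (y, b) * lam (t + 1) b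
          = (∑ q : S × A, mu P η sa t q * P q.1 q.2 y)
            * ∑ b : A, η y b * lam (t + 1) b := by
        intro y
        simp only [mu]
        rw [Finset.mul_sum]
        refine Finset.sum_congr rfl fun b _ => by ring
      simp only [hy]
      have hc_nonneg : ∀ y : S, 0 ≤ ∑ q : S × A, mu P η sa t q * P q.1 q.2 y :=
        fun y => Finset.sum_nonneg fun q _ =>
          mul_nonneg (hmu0 t q) ((hP q.1 q.2).1 y)
      have hc_sum : ∑ y : S, ∑ q : S × A, mu P η sa t q * P q.1 q.2 y = 1 := by
        rw [Finset.sum_comm]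
        calc ∑ q : S × A, ∑ y : S, mu P η sa t q * P q.1 q.2 y
            = ∑ q : S × A, mu P η sa t q := by
              refine Finset.sum_congr rfl fun q _ => ?_
              rw [← Finset.mul_sum, (hP q.1 q.2).2, mul_one]
          _ = 1 := hmu1 t
      calc γ = ∑ y : S, (∑ q : S × A, mu P η sa t q * P q.1 q.2 y) * γ := by
            rw [← Finset.sum_mul, hc_sum, one_mul]
        _ ≤ _ := Finset.sum_le_sum fun y _ =>
            mul_le_mul_of_nonneg_left (hexp (t + 1) (by omega) y) (hc_nonneg y)
    linarith
  -- sum the geometric bound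
  have hbound : xi P γ η lam sa ≤ ∑' t : ℕ, (1 - γ) * γ * γ ^ t := by
    refine Summable.tsum_le_tsum (fun t => ?_) hsum
      (((summable_geometric_of_lt_one hγ0 hγ1).mul_left _))
    calc γ ^ (t + 1) * ∑ p : S × A, mu P η sa (t + 1) p * (1 - lam (t + 1) p.2)
        ≤ γ ^ (t + 1) * (1 - γ) :=
          mul_le_mul_of_nonneg_left (hin_le t) (pow_nonneg hγ0 _)
      _ = (1 - γ) * γ * γ ^ t := by ring
  calc xi P γ η lam sa ≤ ∑' t : ℕ, (1 - γ) * γ * γ ^ t := hbound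
    _ = (1 - γ) * γ * (1 - γ)⁻¹ := by
        rw [tsum_mul_left, tsum_geometric_of_lt_one hγ0 hγ1]
    _ = γ := by
        have h1 : (1 : ℝ) - γ ≠ 0 := by linarith
        rw [mul_comm (1 - γ) γ, mul_assoc, mul_inv_cancel₀ h1, mul_one]
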